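/- arXiv:2601.23054 — 2 statements merged into one kernel-verified Lean document; each statement's English description precedes it below -/
import Mathlib

section
/- For every x ∈ [0,1/q), the image ω_x(K) equals the subgroup of S_q generated by { σ^p τ σ^{−p} : 0 ≤ p ≤ q−1, τ ∈ 𝔖(Q) }, and the image ω_x([H,H]) equals the commutator subgroup [W,W] of W. In particular, the images ω_x(K) and ω_x([H,H]) do not depend on x. -/
open Equiv

noncomputable section

/-- The circle `ℝ/ℤ`. -/
abbrev Circ : Type := AddCircle (1 : ℝ)

/-- Rotation by `a` : the bijection `x ↦ x + a` of the circle. -/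
def Rot (a : Circ) : Equiv.Perm Circ := Equiv.addRight a

/-- The subgroup `{ p/q mod 1 : p ∈ ℤ }` of the circle. -/
def RatPts (q : ℕ) : AddSubgroup Circ :=
  AddSubgroup.zmultiples (((q : ℝ)⁻¹ : ℝ) : Circ)

/-- The group of bijections of the circle all of whose displacements lie in `RatPts q`. -/
def Delta (q : ℕ) : Subgroup (Equiv.Perm Circ) where
  carrier := {f | ∀ x : Circ, f x - x ∈ RatPts q}
  one_mem' := by intro x; simpa using zero_mem (RatPts q)
  mul_mem' := by
    intro f g hf hg x
    have h1 : f (g x) - g x ∈ RatPts q := hf (g x)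
    have h2 : g x - x ∈ RatPts q := hg x
    have h3 := add_mem h1 h2
    simpa [Equiv.Perm.mul_apply, sub_add_sub_cancel] using h3
  inv_mem' := by
    intro f hf x
    have h1 : f (f⁻¹ x) - f⁻¹ x ∈ RatPts q := hf (f⁻¹ x)
    rw [show f (f⁻¹ x) = x by simp] at h1
    simpa using neg_mem h1

/-- The subgroup `A` of the circle generated by the classes of `α₁, …, α_s`. -/
def Agrp (s : ℕ) (α : Fin s → ℝ) : AddSubgroup Circ :=
  AddSubgroup.closure (Set.range fun i => ((α i : ℝ) : Circ))

/-- The group `H` generated by the rotations `R_{αᵢ}` and the maps `E_{τⱼ}`. -/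
def Hgrp (s m q : ℕ) (α : Fin s → ℝ) (τs : Fin m → Equiv.Perm (Fin q))
    (E : Equiv.Perm (Fin q) → Equiv.Perm Circ) : Subgroup (Equiv.Perm Circ) :=
  Subgroup.closure ((Set.range fun i => Rot ((α i : ℝ) : Circ)) ∪ (Set.range fun j => E (τs j)))

/-- The group `Q` generated by the maps `E_{τⱼ}`. -/
def Qgrp (m q : ℕ) (τs : Fin m → Equiv.Perm (Fin q))
    (E : Equiv.Perm (Fin q) → Equiv.Perm Circ) : Subgroup (Equiv.Perm Circ) :=
  Subgroup.closure (Set.range fun j => E (τs j))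

/-- The subgroup `𝔖(Q)` of `S_q` generated by `τ₁, …, τ_m`. -/
def SQgrp (m q : ℕ) (τs : Fin m → Equiv.Perm (Fin q)) : Subgroup (Equiv.Perm (Fin q)) :=
  Subgroup.closure (Set.range τs)

/-- The subgroup `W = ⟨σ, τ₁, …, τ_m⟩` of `S_q`, where `σ` is the `q`-cycle. -/
def Wgrp (m q : ℕ) (τs : Fin m → Equiv.Perm (Fin q)) : Subgroup (Equiv.Perm (Fin q)) :=
  Subgroup.closure ({finRotate q} ∪ Set.range τs)


/-!
Every element `f` of `H` permutes the fibers `{a + p/q}` of `ℝ/ℤ → ℝ/(1/q)ℤ`: it moves the base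
point by some `c ∈ A` and permutes the fiber over `a` by a local permutation `ρ a`. For `R_α` this
is `(α, 1)`; for `E_τ` it is `(0, σ⁻ᵏ τ σᵏ)` over the block `[k/q, (k+1)/q)`. Since `A` meets
`{p/q}` only in `0`, elements of `K` have `c = 0` and `ω_x f = ρ x`, whence `ω_x(K) ⊆ ⟨σᵖ τ σ⁻ᵖ⟩`.
The local permutations of an element of `H` are all congruent modulo `[W,W]`, so those of a
commutator lie in `[W,W]`.

Conversely, `A` is dense, so `a ∈ A` can be chosen with `x - a` in any prescribed block `k`; then
`R_a E_τ R_a⁻¹ ∈ K` has `ω_x = σ⁻ᵏ τ σᵏ` and `[R_a, E_τ] ∈ [H,H] ∩ K` has `ω_x = [σ⁻ᵏ, τ]`.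
Together with `[ω_x K, ω_x K]` these generate a subgroup normalized by `W` that contains the
commutators of the generators of `W`, hence contains `[W,W]`.
-/
open scoped commutatorElement Fin.NatCast

section Commutators

variable {G : Type*} [Group G]

theorem conj_mem_commutator_self {W : Subgroup G} {w d : G} (hw : w ∈ W) (hd : d ∈ ⁅W, W⁆) :
    w * d * w⁻¹ ∈ ⁅W, W⁆ :=
  Subgroup.le_normalizer_iff.mp (Subgroup.normalizer_commutator_ge_left W W) w hw d hd

theorem mul_mul_inv_mem_commutator_self {W : Subgroup G} {a₁ a₂ b₁ b₂ : G} (ha₂ : a₂ ∈ W)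
    (ha : a₁ * a₂⁻¹ ∈ ⁅W, W⁆) (hb : b₁ * b₂⁻¹ ∈ ⁅W, W⁆) :
    a₁ * b₁ * (a₂ * b₂)⁻¹ ∈ ⁅W, W⁆ := by
  have h : a₁ * b₁ * (a₂ * b₂)⁻¹ = a₁ * a₂⁻¹ * (a₂ * (b₁ * b₂⁻¹) * a₂⁻¹) := by group
  exact h ▸ mul_mem ha (conj_mem_commutator_self ha₂ hb)

theorem inv_mul_inv_inv_mem_commutator_self {W : Subgroup G} {a₁ a₂ : G} (ha₁ : a₁ ∈ W)
    (ha : a₁ * a₂⁻¹ ∈ ⁅W, W⁆) : a₁⁻¹ * a₂⁻¹⁻¹ ∈ ⁅W, W⁆ := by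
  have h : a₁⁻¹ * a₂⁻¹⁻¹ = a₁⁻¹ * (a₁ * a₂⁻¹)⁻¹ * a₁⁻¹⁻¹ := by group
  exact h ▸ conj_mem_commutator_self (inv_mem ha₁) (inv_mem ha)

theorem mul_mul_inv_mul_inv_mem_commutator_self {W : Subgroup G} {a₁ a₂ b₁ b₂ : G}
    (ha₂ : a₂ ∈ W) (hb₂ : b₂ ∈ W) (ha : a₁ * a₂⁻¹ ∈ ⁅W, W⁆) (hb : b₁ * b₂⁻¹ ∈ ⁅W, W⁆) :
    a₁ * b₁ * (a₂⁻¹ * b₂⁻¹) ∈ ⁅W, W⁆ := by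
  have h : a₁ * b₁ * (a₂⁻¹ * b₂⁻¹) = a₁ * b₁ * (a₂ * b₂)⁻¹ * ⁅a₂, b₂⁆ := by group
  exact h ▸ mul_mem (mul_mul_inv_mem_commutator_self ha₂ ha hb)
    (Subgroup.commutator_mem_commutator ha₂ hb₂)

theorem conj_mul_conj_inv_mem_commutator_self {W : Subgroup G} {v w τ : G} (hv : v ∈ W)
    (hw : w ∈ W) (hτ : τ ∈ W) : v⁻¹ * τ * v * (w⁻¹ * τ * w)⁻¹ ∈ ⁅W, W⁆ := by
  have h : v⁻¹ * τ * v * (w⁻¹ * τ * w)⁻¹ = ⁅v⁻¹, τ⁆ * ⁅τ, w⁻¹⁆ := by group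
  exact h ▸ mul_mem (Subgroup.commutator_mem_commutator (inv_mem hv) hτ)
    (Subgroup.commutator_mem_commutator hτ (inv_mem hw))

theorem commutator_mem_of_forall_mem_closure {S : Set G} {D : Subgroup G}
    (hD : Subgroup.closure S ≤ Subgroup.normalizer (D : Set G)) {g : G} (hg : ∀ s ∈ S, ⁅g, s⁆ ∈ D)
    {h : G} (hh : h ∈ Subgroup.closure S) : ⁅g, h⁆ ∈ D := by
  induction hh using Subgroup.closure_induction with
  | mem s hs => exact hg s hs
  | one => simp
  | mul a b ha _ hga hgb =>
    have e : ⁅g, a * b⁆ = ⁅g, a⁆ * (a * ⁅g, b⁆ * a⁻¹) := by group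
    exact e ▸ mul_mem hga (Subgroup.le_normalizer_iff.mp hD a ha _ hgb)
  | inv a ha hga =>
    have e : ⁅g, a⁻¹⁆ = a⁻¹ * ⁅g, a⁆⁻¹ * a⁻¹⁻¹ := by group
    exact e ▸ Subgroup.le_normalizer_iff.mp hD _ (inv_mem ha) _ (inv_mem hga)

theorem commutator_closure_le_of_le_normalizer {S : Set G} {D : Subgroup G}
    (hD : Subgroup.closure S ≤ Subgroup.normalizer (D : Set G))
    (hS : ∀ s ∈ S, ∀ t ∈ S, ⁅s, t⁆ ∈ D) :
    ⁅Subgroup.closure S, Subgroup.closure S⁆ ≤ D := by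
  rw [Subgroup.commutator_le]
  intro g hg h hh
  refine commutator_mem_of_forall_mem_closure hD (fun t ht => ?_) hh
  rw [← commutatorElement_inv]
  exact inv_mem (commutator_mem_of_forall_mem_closure hD (hS t ht) hg)

theorem conj_mem_of_mem_closure {T : Set G} {R : Subgroup G} {g : G}
    (hT : ∀ τ ∈ T, g * τ * g⁻¹ ∈ R) {τ : G} (hτ : τ ∈ Subgroup.closure T) : g * τ * g⁻¹ ∈ R :=
  (Subgroup.closure_le (R.comap (MulAut.conj g).toMonoidHom)).mpr hT hτ

theorem commutator_range_le_map_subgroupOf {B : Type*} [Group B] {K L : Subgroup G}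
    (φ : ↥K →* B) (hKL : K ≤ L) : ⁅φ.range, φ.range⁆ ≤ (⁅L, L⁆.subgroupOf K).map φ := by
  rw [MonoidHom.range_eq_map, ← Subgroup.map_commutator]
  refine Subgroup.map_mono ?_
  rw [Subgroup.commutator_le]
  intro f _ g _
  exact Subgroup.commutator_mem_commutator (hKL f.2) (hKL g.2)

def zpowersConjClosure (σ : G) (S : Set G) : Subgroup G :=
  Subgroup.closure {g | ∃ z : ℤ, ∃ τ ∈ S, g = σ ^ z * τ * (σ ^ z)⁻¹}

theorem zpow_conj_mem_zpowersConjClosure {σ τ : G} {S : Set G} (hτ : τ ∈ S) (z : ℤ) :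
    σ ^ z * τ * (σ ^ z)⁻¹ ∈ zpowersConjClosure σ S :=
  Subgroup.subset_closure ⟨z, τ, hτ, rfl⟩

theorem zpowers_le_normalizer_zpowersConjClosure (σ : G) (S : Set G) :
    Subgroup.zpowers σ ≤ Subgroup.normalizer (zpowersConjClosure σ S : Set G) := by
  rw [zpowersConjClosure, Subgroup.le_normalizer_closure_iff]
  rintro _ ⟨e, rfl⟩ _ ⟨z, τ, hτ, rfl⟩
  refine Subgroup.subset_closure ⟨e + z, τ, hτ, ?_⟩
  simp only [zpow_add]
  group

def zpowCommutatorClosure (σ : G) (S : Set G) : Subgroup G :=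
  Subgroup.closure ({g | ∃ z : ℤ, ∃ τ ∈ S, g = ⁅σ ^ z, τ⁆} ∪
    {g | ∃ n ∈ zpowersConjClosure σ S, ∃ n' ∈ zpowersConjClosure σ S, g = ⁅n, n'⁆})

section zpowCommutatorClosure

variable {σ : G} {S : Set G}

theorem self_mem_zpowersConjClosure {τ : G} (hτ : τ ∈ S) : τ ∈ zpowersConjClosure σ S := by
  simpa using zpow_conj_mem_zpowersConjClosure hτ (σ := σ) 0

theorem zpow_commutator_mem_zpowCommutatorClosure {τ : G} (hτ : τ ∈ S) (z : ℤ) :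
    ⁅σ ^ z, τ⁆ ∈ zpowCommutatorClosure σ S :=
  Subgroup.subset_closure (Or.inl ⟨z, τ, hτ, rfl⟩)

theorem commutator_mem_zpowCommutatorClosure {n n' : G} (hn : n ∈ zpowersConjClosure σ S)
    (hn' : n' ∈ zpowersConjClosure σ S) : ⁅n, n'⁆ ∈ zpowCommutatorClosure σ S :=
  Subgroup.subset_closure (Or.inr ⟨n, hn, n', hn', rfl⟩)

theorem zpowCommutatorClosure_le_zpowersConjClosure :
    zpowCommutatorClosure σ S ≤ zpowersConjClosure σ S := by
  rw [zpowCommutatorClosure, Subgroup.closure_le]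
  rintro _ (⟨z, τ, hτ, rfl⟩ | ⟨n, hn, n', hn', rfl⟩) <;> rw [commutatorElement_def]
  · exact mul_mem (zpow_conj_mem_zpowersConjClosure hτ z) (inv_mem (self_mem_zpowersConjClosure hτ))
  · exact mul_mem (mul_mem (mul_mem hn hn') (inv_mem hn)) (inv_mem hn')

theorem zpowersConjClosure_le_normalizer_zpowCommutatorClosure :
    zpowersConjClosure σ S ≤ Subgroup.normalizer (zpowCommutatorClosure σ S : Set G) := by
  rw [zpowCommutatorClosure, Subgroup.le_normalizer_closure_iff]
  intro h hh g hg
  have e : h * g * h⁻¹ = ⁅h, g⁆ * g := by group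
  exact e ▸ mul_mem (commutator_mem_zpowCommutatorClosure hh
    (zpowCommutatorClosure_le_zpowersConjClosure (Subgroup.subset_closure hg)))
    (Subgroup.subset_closure hg)

theorem zpowers_le_normalizer_zpowCommutatorClosure :
    Subgroup.zpowers σ ≤ Subgroup.normalizer (zpowCommutatorClosure σ S : Set G) := by
  rw [zpowCommutatorClosure, Subgroup.le_normalizer_closure_iff]
  rintro _ ⟨e, rfl⟩ _ (⟨z, τ, hτ, rfl⟩ | ⟨n, hn, n', hn', rfl⟩)
  · have h : σ ^ e * ⁅σ ^ z, τ⁆ * (σ ^ e)⁻¹ = ⁅σ ^ (e + z), τ⁆ * ⁅σ ^ e, τ⁆⁻¹ := by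
      simp only [commutatorElement_def, zpow_add]
      group
    exact h ▸ mul_mem (zpow_commutator_mem_zpowCommutatorClosure hτ _)
      (inv_mem (zpow_commutator_mem_zpowCommutatorClosure hτ _))
  · have hconj := Subgroup.le_normalizer_iff.mp (zpowers_le_normalizer_zpowersConjClosure σ S)
      (σ ^ e) (Subgroup.zpow_mem_zpowers σ e)
    have h : σ ^ e * ⁅n, n'⁆ * (σ ^ e)⁻¹
        = ⁅σ ^ e * n * (σ ^ e)⁻¹, σ ^ e * n' * (σ ^ e)⁻¹⁆ := by
      simp only [commutatorElement_def]
      group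
    exact h ▸ commutator_mem_zpowCommutatorClosure (hconj n hn) (hconj n' hn')

theorem commutator_closure_le_zpowCommutatorClosure :
    ⁅Subgroup.closure ({σ} ∪ S), Subgroup.closure ({σ} ∪ S)⁆ ≤ zpowCommutatorClosure σ S := by
  refine commutator_closure_le_of_le_normalizer ?_ ?_
  · rw [Subgroup.closure_le]
    rintro g (rfl | hg)
    · exact zpowers_le_normalizer_zpowCommutatorClosure (Subgroup.mem_zpowers g)
    · exact zpowersConjClosure_le_normalizer_zpowCommutatorClosure (self_mem_zpowersConjClosure hg)
  · have hσ : ∀ τ ∈ S, ⁅σ, τ⁆ ∈ zpowCommutatorClosure σ S := fun τ hτ => by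
      simpa using zpow_commutator_mem_zpowCommutatorClosure hτ 1
    rintro s (rfl | hs) t (rfl | ht)
    · simp
    · exact hσ t ht
    · rw [← commutatorElement_inv]
      exact inv_mem (hσ s hs)
    · exact commutator_mem_zpowCommutatorClosure (self_mem_zpowersConjClosure hs)
        (self_mem_zpowersConjClosure ht)

theorem commutator_closure_le_of_zpow_commutator_mem {D : Subgroup G}
    (hN : ⁅zpowersConjClosure σ S, zpowersConjClosure σ S⁆ ≤ D)
    (hσ : ∀ z : ℤ, ∀ τ ∈ S, ⁅σ ^ z, τ⁆ ∈ D) :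
    ⁅Subgroup.closure ({σ} ∪ S), Subgroup.closure ({σ} ∪ S)⁆ ≤ D := by
  refine commutator_closure_le_zpowCommutatorClosure.trans ?_
  rw [zpowCommutatorClosure, Subgroup.closure_le]
  rintro _ (⟨z, τ, hτ, rfl⟩ | ⟨n, hn, n', hn', rfl⟩)
  · exact hσ z τ hτ
  · exact hN (Subgroup.commutator_mem_commutator hn hn')

end zpowCommutatorClosure

end Commutators

section Blocks

variable {q : ℕ} [NeZero q]

theorem coe_mod_div (n : ℕ) :
    ((((n % q : ℕ) : ℝ) / q : ℝ) : Circ) = (((n : ℝ) / q : ℝ) : Circ) := by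
  have hq : (q : ℝ) ≠ 0 := Nat.cast_ne_zero.mpr (NeZero.ne q)
  have h : (n : ℝ) / q = ((n % q : ℕ) : ℝ) / q + ((n / q : ℕ) : ℝ) := by
    rw [div_add' _ _ _ hq, div_left_inj' hq]
    norm_cast
    exact (Nat.mod_add_div' n q).symm
  rw [h, AddCircle.coe_add, left_eq_add]
  exact (AddCircle.coe_eq_zero_iff 1).mpr ⟨(n / q : ℕ), by rw [zsmul_one, Int.cast_natCast]⟩

theorem coe_val_add_div (i j : Fin q) :
    (((((i + j : Fin q) : ℕ) : ℝ) / q : ℝ) : Circ)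
      = ((((i : ℕ) : ℝ) / q : ℝ) : Circ) + ((((j : ℕ) : ℝ) / q : ℝ) : Circ) := by
  rw [Fin.val_add, coe_mod_div, ← AddCircle.coe_add, Nat.cast_add, add_div]

theorem block_mem_Ico (k : Fin q) {t : ℝ} (ht₀ : 0 ≤ t) (ht : t < 1 / q) :
    ((k : ℕ) : ℝ) / q + t ∈ Set.Ico (0 : ℝ) (0 + 1) := by
  have hq : (0 : ℝ) < q := Nat.cast_pos.mpr (Nat.pos_of_ne_zero (NeZero.ne q))
  have hk : ((k : ℕ) : ℝ) + 1 ≤ q := by exact_mod_cast k.isLt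
  refine ⟨by positivity, ?_⟩
  rw [zero_add, div_add' _ _ _ hq.ne', div_lt_one hq]
  rw [lt_div_iff₀ hq] at ht
  nlinarith

theorem floor_mul_block (k : ℕ) {t : ℝ} (ht₀ : 0 ≤ t) (ht : t < 1 / q) :
    ⌊(q : ℝ) * ((k : ℝ) / q + t)⌋₊ = k := by
  have hq : (0 : ℝ) < q := Nat.cast_pos.mpr (Nat.pos_of_ne_zero (NeZero.ne q))
  rw [lt_div_iff₀ hq] at ht
  rw [Nat.floor_eq_iff (by positivity), mul_add, mul_div_cancel₀ _ hq.ne']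
  constructor <;> nlinarith

theorem block_index_unique {k k' : Fin q} {t t' : ℝ} (ht₀ : 0 ≤ t) (ht : t < 1 / q)
    (ht₀' : 0 ≤ t') (ht' : t' < 1 / q)
    (h : ((((k : ℕ) : ℝ) / q + t : ℝ) : Circ) = ((((k' : ℕ) : ℝ) / q + t' : ℝ) : Circ)) :
    k = k' := by
  have e := (AddCircle.coe_eq_coe_iff_of_mem_Ico (block_mem_Ico k ht₀ ht)
    (block_mem_Ico k' ht₀' ht')).mp h
  have := congrArg (fun r => ⌊(q : ℝ) * r⌋₊) e
  simp only [floor_mul_block _ ht₀ ht, floor_mul_block _ ht₀' ht'] at this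
  exact Fin.ext this

theorem exists_eq_block (z : Circ) :
    ∃ (k : Fin q) (t : ℝ), 0 ≤ t ∧ t < 1 / q ∧ z = ((((k : ℕ) : ℝ) / q + t : ℝ) : Circ) := by
  have hq : (0 : ℝ) < q := Nat.cast_pos.mpr (Nat.pos_of_ne_zero (NeZero.ne q))
  obtain ⟨r, ⟨hr₀, hr₁⟩, rfl⟩ := AddCircle.eq_coe_Ico z
  have hk : ⌊(q : ℝ) * r⌋₊ < q := by
    rw [Nat.floor_lt (by positivity)]
    nlinarith
  refine ⟨⟨_, hk⟩, r - ⌊(q : ℝ) * r⌋₊ / q, ?_, ?_, by simp⟩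
  · rw [sub_nonneg, div_le_iff₀ hq, mul_comm]
    exact Nat.floor_le (by positivity)
  · rw [sub_lt_iff_lt_add, ← add_div, lt_div_iff₀ hq, mul_comm, add_comm]
    exact Nat.lt_floor_add_one _

end Blocks

/-- For fixed `a`, the points `fiberPt q a p` form the fiber over `a` of `ℝ/ℤ → ℝ/(1/q)ℤ`. -/
def fiberPt (q : ℕ) (a : Circ) (p : Fin q) : Circ := a + ((((p : ℕ) : ℝ) / q : ℝ) : Circ)

theorem fiberPt_zero {q : ℕ} [NeZero q] (a : Circ) : fiberPt q a 0 = a := by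
  simp [fiberPt]

theorem fiberPt_add {q : ℕ} (a b : Circ) (p : Fin q) :
    fiberPt q a p + b = fiberPt q (a + b) p := by
  simp only [fiberPt]
  abel

theorem fiberPt_injective {q : ℕ} [NeZero q] (a : Circ) : Function.Injective (fiberPt q a) := by
  intro p p' h
  have hq : (0 : ℝ) < 1 / q := by
    have := Nat.pos_of_ne_zero (NeZero.ne q)
    positivity
  refine block_index_unique le_rfl hq le_rfl hq ?_
  simpa using add_left_cancel h

theorem fiberPt_block {q : ℕ} [NeZero q] (k p : Fin q) (t : ℝ) :
    fiberPt q ((((k : ℕ) : ℝ) / q + t : ℝ) : Circ) p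
      = (((((k + p : Fin q) : ℕ) : ℝ) / q + t : ℝ) : Circ) := by
  simp only [fiberPt, coe_val_add_div, AddCircle.coe_add]
  abel

theorem coe_natCast_div_mem_RatPts (q n : ℕ) : ((((n : ℝ) / q : ℝ)) : Circ) ∈ RatPts q := by
  have h : ((((n : ℝ) / q : ℝ)) : Circ) = n • (((q : ℝ)⁻¹ : ℝ) : Circ) := by
    rw [← AddCircle.coe_nsmul, nsmul_eq_mul, div_eq_mul_inv]
  exact h ▸ AddSubgroup.nsmul_mem _ (AddSubgroup.mem_zmultiples _) n

def IsFiberwise (q : ℕ) (f : Equiv.Perm Circ) (c : Circ) (ρ : Circ → Equiv.Perm (Fin q)) :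
    Prop :=
  ∀ a p, f (fiberPt q a p) = fiberPt q (a + c) (ρ a p)

theorem Rot_apply (a z : Circ) : Rot a z = z + a := rfl

namespace IsFiberwise

variable {q : ℕ} {f g : Equiv.Perm Circ} {c c' : Circ} {ρ ρ' : Circ → Equiv.Perm (Fin q)}

theorem one : IsFiberwise q 1 0 (fun _ => 1) := by
  intro a p
  simp

theorem rot (b : Circ) : IsFiberwise q (Rot b) b (fun _ => 1) := fun a p =>
  fiberPt_add a b p

theorem mul (hf : IsFiberwise q f c ρ) (hg : IsFiberwise q g c' ρ') :
    IsFiberwise q (f * g) (c' + c) (fun a => ρ (a + c') * ρ' a) := by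
  intro a p
  rw [Equiv.Perm.mul_apply, hg a p, hf (a + c') (ρ' a p), Equiv.Perm.mul_apply, ← add_assoc]

theorem inv (hf : IsFiberwise q f c ρ) : IsFiberwise q f⁻¹ (-c) (fun a => (ρ (a - c))⁻¹) := by
  intro a p
  rw [Equiv.Perm.inv_eq_iff_eq, hf, ← sub_eq_add_neg, sub_add_cancel]
  simp

theorem translation_congr (hf : IsFiberwise q f c ρ) (h : c = c') : IsFiberwise q f c' ρ :=
  h ▸ hf

theorem conj_rot (hf : IsFiberwise q f 0 ρ) (a : Circ) :
    IsFiberwise q (Rot a * f * (Rot a)⁻¹) 0 (fun b => ρ (b - a)) := by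
  intro b p
  have h : (Rot a)⁻¹ (fiberPt q b p) = fiberPt q (b - a) p := by
    rw [Equiv.Perm.inv_eq_iff_eq, Rot_apply, fiberPt_add, sub_add_cancel]
  rw [Equiv.Perm.mul_apply, Equiv.Perm.mul_apply, h, hf, Rot_apply, fiberPt_add, add_zero,
    add_zero, sub_add_cancel]

theorem mem_Delta [NeZero q] (hf : IsFiberwise q f 0 ρ) : f ∈ Delta q := by
  intro y
  rw [← fiberPt_zero (q := q) y, hf, add_zero, fiberPt, fiberPt_zero, add_sub_cancel_left]
  exact coe_natCast_div_mem_RatPts q _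

theorem translation_mem_RatPts [NeZero q] (hf : IsFiberwise q f c ρ) (hΔ : f ∈ Delta q) :
    c ∈ RatPts q := by
  have h := hΔ 0
  rw [← fiberPt_zero (q := q) 0, hf, zero_add, fiberPt, fiberPt_zero] at h
  simpa using sub_mem h (coe_natCast_div_mem_RatPts q (ρ 0 0))

end IsFiberwise

def fiberwiseSubgroup (q : ℕ) (C : AddSubgroup Circ) (P : Subgroup (Equiv.Perm (Fin q))) :
    Subgroup (Equiv.Perm Circ) where
  carrier := {f | ∃ c ∈ C, ∃ ρ : Circ → Equiv.Perm (Fin q), (∀ a, ρ a ∈ P) ∧ IsFiberwise q f c ρ}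
  one_mem' := ⟨0, zero_mem C, fun _ => 1, fun _ => one_mem P, IsFiberwise.one⟩
  mul_mem' := by
    rintro f g ⟨c, hc, ρ, hρ, hf⟩ ⟨c', hc', ρ', hρ', hg⟩
    exact ⟨c' + c, add_mem hc' hc, _, fun a => mul_mem (hρ _) (hρ' _), hf.mul hg⟩
  inv_mem' := by
    rintro f ⟨c, hc, ρ, hρ, hf⟩
    exact ⟨-c, neg_mem hc, _, fun a => inv_mem (hρ _), hf.inv⟩

def fiberwiseModCommSubgroup (q : ℕ) (C : AddSubgroup Circ) (W : Subgroup (Equiv.Perm (Fin q))) :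
    Subgroup (Equiv.Perm Circ) where
  carrier := {f | ∃ c ∈ C, ∃ ρ : Circ → Equiv.Perm (Fin q),
    (∀ a, ρ a ∈ W) ∧ (∀ a b, ρ a * (ρ b)⁻¹ ∈ ⁅W, W⁆) ∧ IsFiberwise q f c ρ}
  one_mem' := ⟨0, zero_mem C, fun _ => 1, fun _ => one_mem W, fun _ _ => by simp,
    IsFiberwise.one⟩
  mul_mem' := by
    rintro f g ⟨c, hc, ρ, hρ, hρρ, hf⟩ ⟨c', hc', ρ', hρ', hρρ', hg⟩
    exact ⟨c' + c, add_mem hc' hc, _, fun a => mul_mem (hρ _) (hρ' _),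
      fun a b => mul_mul_inv_mem_commutator_self (hρ _) (hρρ _ _) (hρρ' _ _), hf.mul hg⟩
  inv_mem' := by
    rintro f ⟨c, hc, ρ, hρ, hρρ, hf⟩
    exact ⟨-c, neg_mem hc, _, fun a => inv_mem (hρ _),
      fun a b => inv_mul_inv_inv_mem_commutator_self (hρ _) (hρρ _ _), hf.inv⟩

theorem commutator_fiberwiseModCommSubgroup_le (q : ℕ) (C : AddSubgroup Circ)
    (W : Subgroup (Equiv.Perm (Fin q))) :
    ⁅fiberwiseModCommSubgroup q C W, fiberwiseModCommSubgroup q C W⁆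
      ≤ fiberwiseSubgroup q ⊥ ⁅W, W⁆ := by
  rw [Subgroup.commutator_le]
  rintro f ⟨c, -, ρ, hρ, hρρ, hf⟩ g ⟨c', -, ρ', hρ', hρρ', hg⟩
  have h := ((hf.mul hg).mul hf.inv).mul hg.inv
  refine ⟨0, rfl, _, fun a => ?_, h.translation_congr (by abel)⟩
  rw [mul_assoc]
  exact mul_mul_inv_mul_inv_mem_commutator_self (hρ _) (hρ' _) (hρρ _ _) (hρρ' _ _)

def IsLocalPermAt (q : ℕ) {K : Subgroup (Equiv.Perm Circ)} (x : ℝ)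
    (ωx : ↥K →* Equiv.Perm (Fin q)) : Prop :=
  ∀ (f : ↥K) (i : Fin q), (f : Equiv.Perm Circ) ((x + ((i : ℕ) : ℝ) / q : ℝ) : Circ)
    = ((x + ((ωx f i : ℕ) : ℝ) / q : ℝ) : Circ)

namespace IsLocalPermAt

variable {q : ℕ} [NeZero q] {K : Subgroup (Equiv.Perm Circ)} {x : ℝ}
  {ωx : ↥K →* Equiv.Perm (Fin q)}

theorem eq_of_isFiberwise (hω : IsLocalPermAt q x ωx) {f : ↥K}
    {ρ : Circ → Equiv.Perm (Fin q)} (hf : IsFiberwise q f 0 ρ) : ωx f = ρ x := by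
  ext i
  refine congrArg Fin.val (fiberPt_injective (x : Circ) ?_)
  have h := hf x i
  rw [add_zero] at h
  exact h ▸ (hω f i).symm

theorem range_le (hω : IsLocalPermAt q x ωx) {C : AddSubgroup Circ}
    {P : Subgroup (Equiv.Perm (Fin q))} (hK : K ≤ fiberwiseSubgroup q C P ⊓ Delta q)
    (hC : Disjoint C (RatPts q)) : ωx.range ≤ P := by
  rintro _ ⟨f, rfl⟩
  obtain ⟨⟨c, hcC, ρ, hρ, hf⟩, hfΔ⟩ := hK f.2
  obtain rfl : c = 0 := AddSubgroup.disjoint_def.mp hC hcC (hf.translation_mem_RatPts hfΔ)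
  exact hω.eq_of_isFiberwise hf ▸ hρ _

theorem map_subgroupOf_le (hω : IsLocalPermAt q x ωx) {L : Subgroup (Equiv.Perm Circ)}
    {P : Subgroup (Equiv.Perm (Fin q))} (hL : L ≤ fiberwiseSubgroup q ⊥ P) :
    (L.subgroupOf K).map ωx ≤ P := by
  rintro _ ⟨f, hf, rfl⟩
  obtain ⟨c, hc, ρ, hρ, hf⟩ := hL hf
  obtain rfl : c = 0 := hc
  exact hω.eq_of_isFiberwise hf ▸ hρ _

end IsLocalPermAt

section Rotation

variable {q : ℕ} [NeZero q]

theorem finRotate_pow_apply (n : ℕ) (p : Fin q) : (finRotate q ^ n) p = p + n := by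
  induction n generalizing p with
  | zero => simp
  | succ n ih => rw [pow_succ', Equiv.Perm.mul_apply, finRotate_apply, ih, Nat.cast_succ, add_assoc]

theorem finRotate_pow_self : finRotate q ^ q = 1 := by
  ext p
  simp [finRotate_pow_apply]

theorem exists_lt_finRotate_pow_eq_zpow (z : ℤ) : ∃ p < q, finRotate q ^ p = finRotate q ^ z := by
  have hq : (0 : ℤ) < q := Int.natCast_pos.mpr (Nat.pos_of_ne_zero (NeZero.ne q))
  refine ⟨(z % q).toNat, by have := Int.emod_lt_of_pos z hq; omega, ?_⟩
  rw [zpow_eq_zpow_emod' z finRotate_pow_self, ← zpow_natCast,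
    Int.toNat_of_nonneg (Int.emod_nonneg z hq.ne')]

theorem finRotate_pow_conj_apply (τ : Equiv.Perm (Fin q)) (k p : Fin q) :
    ((finRotate q ^ (k : ℕ))⁻¹ * τ * finRotate q ^ (k : ℕ)) p = τ (p + k) - k := by
  rw [Equiv.Perm.mul_apply, Equiv.Perm.mul_apply, finRotate_pow_apply, Fin.cast_val_eq_self,
    Equiv.Perm.inv_eq_iff_eq, finRotate_pow_apply, Fin.cast_val_eq_self, sub_add_cancel]

theorem finRotate_pow_inv_conj_mem_closure {m : ℕ} {τs : Fin m → Equiv.Perm (Fin q)}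
    {τ : Equiv.Perm (Fin q)} (hτ : τ ∈ SQgrp m q τs) (k : ℕ) :
    (finRotate q ^ k)⁻¹ * τ * finRotate q ^ k ∈ Subgroup.closure
      {π : Equiv.Perm (Fin q) | ∃ p < q, ∃ τ ∈ SQgrp m q τs,
        π = finRotate q ^ p * τ * (finRotate q ^ p)⁻¹} := by
  obtain ⟨p, hp, hpk⟩ := exists_lt_finRotate_pow_eq_zpow (q := q) (-k)
  refine Subgroup.subset_closure ⟨p, hp, τ, hτ, ?_⟩
  rw [hpk, zpow_neg, zpow_natCast, inv_inv]

end Rotation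

def PermutesBlocks (q : ℕ) (E : Equiv.Perm (Fin q) → Equiv.Perm Circ) : Prop :=
  ∀ (τ : Equiv.Perm (Fin q)) (i : Fin q) (t : ℝ), 0 ≤ t → t < 1 / q →
    E τ ((((i : ℕ) : ℝ) / q + t : ℝ) : Circ) = ((((τ i : ℕ) : ℝ) / q + t : ℝ) : Circ)

namespace PermutesBlocks

variable {q : ℕ} [NeZero q] {E : Equiv.Perm (Fin q) → Equiv.Perm Circ}

theorem apply_fiberPt (hE : PermutesBlocks q E) (τ : Equiv.Perm (Fin q)) (k : Fin q) {t : ℝ}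
    (ht₀ : 0 ≤ t) (ht : t < 1 / q) (p : Fin q) :
    E τ (fiberPt q ((((k : ℕ) : ℝ) / q + t : ℝ) : Circ) p)
      = fiberPt q ((((k : ℕ) : ℝ) / q + t : ℝ) : Circ)
          (((finRotate q ^ (k : ℕ))⁻¹ * τ * finRotate q ^ (k : ℕ)) p) := by
  rw [fiberPt_block, fiberPt_block, hE τ _ t ht₀ ht, finRotate_pow_conj_apply, add_comm p,
    add_sub_cancel]

theorem exists_isFiberwise (hE : PermutesBlocks q E) (τ : Equiv.Perm (Fin q)) :
    ∃ ρ : Circ → Equiv.Perm (Fin q), IsFiberwise q (E τ) 0 ρ ∧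
      (∀ a, ∃ k : ℕ, ρ a = (finRotate q ^ k)⁻¹ * τ * finRotate q ^ k) ∧
      ∀ (k : Fin q) (t : ℝ), 0 ≤ t → t < 1 / q →
        ρ ((((k : ℕ) : ℝ) / q + t : ℝ) : Circ)
          = (finRotate q ^ (k : ℕ))⁻¹ * τ * finRotate q ^ (k : ℕ) := by
  choose k t ht₀ ht hkt using exists_eq_block (q := q)
  refine ⟨fun a => (finRotate q ^ (k a : ℕ))⁻¹ * τ * finRotate q ^ (k a : ℕ), fun a p => ?_,
    fun a => ⟨k a, rfl⟩, fun k' t' ht₀' ht' => ?_⟩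
  · rw [add_zero]
    conv_lhs => rw [hkt a]
    rw [hE.apply_fiberPt τ _ (ht₀ a) (ht a), ← hkt a]
  · have h : k _ = k' := block_index_unique (ht₀ _) (ht _) ht₀' ht' (hkt _).symm
    simp only [h]

end PermutesBlocks

section Independence

variable {s : ℕ} {α : Fin s → ℝ}

theorem exists_mem_span_coe_eq_of_mem_Agrp {c : Circ} (hc : c ∈ Agrp s α) :
    ∃ r ∈ Submodule.span ℚ (Set.range α), (r : Circ) = c := by
  induction hc using AddSubgroup.closure_induction with
  | mem _ hc =>
    obtain ⟨i, rfl⟩ := hc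
    exact ⟨α i, Submodule.subset_span ⟨i, rfl⟩, rfl⟩
  | zero => exact ⟨0, zero_mem _, rfl⟩
  | add _ _ _ _ hc hd =>
    obtain ⟨r, hr, rfl⟩ := hc
    obtain ⟨r', hr', rfl⟩ := hd
    exact ⟨r + r', add_mem hr hr', rfl⟩
  | neg _ _ hc =>
    obtain ⟨r, hr, rfl⟩ := hc
    exact ⟨-r, neg_mem hr, rfl⟩

theorem eq_zero_of_ratCast_mem_span (h : (1 : ℝ) ∉ Submodule.span ℚ (Set.range α)) {r : ℚ}
    (hr : (r : ℝ) ∈ Submodule.span ℚ (Set.range α)) : r = 0 := by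
  by_contra hr₀
  refine h ?_
  simpa [Rat.smul_def, hr₀] using Submodule.smul_mem _ r⁻¹ hr

theorem disjoint_Agrp_RatPts (hα : LinearIndependent ℚ (Fin.cons (1 : ℝ) α)) (q : ℕ) :
    Disjoint (Agrp s α) (RatPts q) := by
  rw [AddSubgroup.disjoint_def]
  intro c hcA hcR
  obtain ⟨r, hr, rfl⟩ := exists_mem_span_coe_eq_of_mem_Agrp hcA
  obtain ⟨z, hz⟩ := AddSubgroup.mem_zmultiples_iff.mp hcR
  rw [← AddCircle.coe_zsmul, ← sub_eq_zero, ← AddCircle.coe_sub, AddCircle.coe_eq_zero_iff] at hz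
  obtain ⟨n, hn⟩ := hz
  have hrat : r = ((z / q - n : ℚ) : ℝ) := by
    push_cast
    rw [zsmul_eq_mul, zsmul_eq_mul, mul_one] at hn
    rw [div_eq_mul_inv]
    linarith
  rw [hrat] at hr ⊢
  rw [eq_zero_of_ratCast_mem_span (linearIndependent_finCons.mp hα).2 hr]
  simp

theorem irrational_of_linearIndependent (hα : LinearIndependent ℚ (Fin.cons (1 : ℝ) α))
    (i : Fin s) : Irrational (α i) := by
  rintro ⟨r, hr⟩
  have hmem : (r : ℝ) ∈ Submodule.span ℚ (Set.range α) := hr ▸ Submodule.subset_span ⟨i, rfl⟩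
  have h0 := eq_zero_of_ratCast_mem_span (linearIndependent_finCons.mp hα).2 hmem
  exact (linearIndependent_finCons.mp hα).1.ne_zero i (by rw [← hr, h0, Rat.cast_zero])

theorem exists_mem_Agrp_sub_eq_block (hs : 1 ≤ s) (hα : LinearIndependent ℚ (Fin.cons (1 : ℝ) α))
    {q : ℕ} [NeZero q] (y : ℝ) (k : Fin q) :
    ∃ a ∈ Agrp s α, ∃ t : ℝ, 0 ≤ t ∧ t < 1 / q ∧
      (y : Circ) - a = ((((k : ℕ) : ℝ) / q + t : ℝ) : Circ) := by
  have hdense : Dense (AddSubgroup.closure {α ⟨0, hs⟩, 1} : Set ℝ) := by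
    rw [dense_addSubgroupClosure_pair_iff, div_one]
    exact irrational_of_linearIndependent hα _
  have hle : AddSubgroup.closure {α ⟨0, hs⟩, 1}
      ≤ (Agrp s α).comap (QuotientAddGroup.mk' (AddSubgroup.zmultiples (1 : ℝ))) := by
    rw [AddSubgroup.closure_le]
    rintro _ (rfl | rfl)
    · exact AddSubgroup.subset_closure ⟨_, rfl⟩
    · show ((1 : ℝ) : Circ) ∈ Agrp s α
      rw [AddCircle.coe_period]
      exact zero_mem _
  have hq : (0 : ℝ) < 1 / q := by
    have := Nat.pos_of_ne_zero (NeZero.ne q)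
    positivity
  obtain ⟨r, hr, hr₁, hr₂⟩ :=
    hdense.exists_between (sub_lt_self (y - ((k : ℕ) : ℝ) / q) hq)
  refine ⟨r, hle hr, y - (k : ℕ) / q - r, by linarith, by linarith, ?_⟩
  rw [← AddCircle.coe_sub]
  congr 1
  ring

end Independence

theorem Rot_mem_Hgrp {s m q : ℕ} {α : Fin s → ℝ} {τs : Fin m → Equiv.Perm (Fin q)}
    {E : Equiv.Perm (Fin q) → Equiv.Perm Circ} {a : Circ} (ha : a ∈ Agrp s α) :
    Rot a ∈ Hgrp s m q α τs E := by
  induction ha using AddSubgroup.closure_induction with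
  | mem _ ha =>
    obtain ⟨i, rfl⟩ := ha
    exact Subgroup.subset_closure (Or.inl ⟨i, rfl⟩)
  | zero => simp [Rot]
  | add a b _ _ ha hb => simpa [Rot] using mul_mem hb ha
  | neg a _ ha => simpa [Rot] using inv_mem ha

theorem E_mem_Hgrp {s m q : ℕ} {α : Fin s → ℝ} {τs : Fin m → Equiv.Perm (Fin q)}
    {E : Equiv.Perm (Fin q) → Equiv.Perm Circ} (j : Fin m) : E (τs j) ∈ Hgrp s m q α τs E :=
  Subgroup.subset_closure (Or.inr ⟨j, rfl⟩)

section Generators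

variable {s m q : ℕ} [NeZero q] {α : Fin s → ℝ} {τs : Fin m → Equiv.Perm (Fin q)}
  {E : Equiv.Perm (Fin q) → Equiv.Perm Circ}

theorem Hgrp_le_fiberwiseSubgroup (hE : PermutesBlocks q E) {P : Subgroup (Equiv.Perm (Fin q))}
    (hP : ∀ (j : Fin m) (k : ℕ), (finRotate q ^ k)⁻¹ * τs j * finRotate q ^ k ∈ P) :
    Hgrp s m q α τs E ≤ fiberwiseSubgroup q (Agrp s α) P := by
  rw [Hgrp, Subgroup.closure_le]
  rintro f (⟨i, rfl⟩ | ⟨j, rfl⟩)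
  · exact ⟨_, AddSubgroup.subset_closure ⟨i, rfl⟩, _, fun _ => one_mem P, IsFiberwise.rot _⟩
  · obtain ⟨ρ, hf, hρ, -⟩ := hE.exists_isFiberwise (τs j)
    refine ⟨0, zero_mem _, ρ, fun a => ?_, hf⟩
    obtain ⟨k, hk⟩ := hρ a
    exact hk ▸ hP j k

theorem Hgrp_le_fiberwiseModCommSubgroup (hE : PermutesBlocks q E) :
    Hgrp s m q α τs E ≤ fiberwiseModCommSubgroup q (Agrp s α) (Wgrp m q τs) := by
  have hσ : finRotate q ∈ Wgrp m q τs := Subgroup.subset_closure (Or.inl rfl)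
  have hτ : ∀ j, τs j ∈ Wgrp m q τs := fun j => Subgroup.subset_closure (Or.inr ⟨j, rfl⟩)
  rw [Hgrp, Subgroup.closure_le]
  rintro f (⟨i, rfl⟩ | ⟨j, rfl⟩)
  · exact ⟨_, AddSubgroup.subset_closure ⟨i, rfl⟩, _, fun _ => one_mem _, fun _ _ => by simp,
      IsFiberwise.rot _⟩
  · obtain ⟨ρ, hf, hρ, -⟩ := hE.exists_isFiberwise (τs j)
    refine ⟨0, zero_mem _, ρ, fun a => ?_, fun a b => ?_, hf⟩
    · obtain ⟨k, hk⟩ := hρ a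
      rw [hk]
      exact mul_mem (mul_mem (inv_mem (pow_mem hσ k)) (hτ j)) (pow_mem hσ k)
    · obtain ⟨k, hk⟩ := hρ a
      obtain ⟨l, hl⟩ := hρ b
      rw [hk, hl]
      exact conj_mul_conj_inv_mem_commutator_self (pow_mem hσ k) (pow_mem hσ l) (hτ j)

variable {K : Subgroup (Equiv.Perm Circ)} {x : ℝ} {ωx : ↥K →* Equiv.Perm (Fin q)}

theorem IsLocalPermAt.apply_E (hE : PermutesBlocks q E) (hω : IsLocalPermAt q x ωx)
    (hx₀ : 0 ≤ x) (hx : x < 1 / q) (hK : Hgrp s m q α τs E ⊓ Delta q ≤ K) (j : Fin m) :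
    ∃ h : E (τs j) ∈ K, ωx ⟨_, h⟩ = τs j := by
  obtain ⟨ρ, hf, -, hρ⟩ := hE.exists_isFiberwise (τs j)
  refine ⟨hK ⟨E_mem_Hgrp j, hf.mem_Delta⟩, ?_⟩
  have hx' : (x : Circ) = (((((0 : Fin q) : ℕ) : ℝ) / q + x : ℝ) : Circ) := by simp
  rw [hω.eq_of_isFiberwise (f := ⟨_, _⟩) hf, hx', hρ 0 x hx₀ hx]
  simp

theorem IsLocalPermAt.exists_apply_conj_Rot (hs : 1 ≤ s)
    (hα : LinearIndependent ℚ (Fin.cons (1 : ℝ) α)) (hE : PermutesBlocks q E)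
    (hω : IsLocalPermAt q x ωx) (hK : Hgrp s m q α τs E ⊓ Delta q ≤ K) (z : ℤ) (j : Fin m) :
    ∃ a ∈ Agrp s α, ∃ h : Rot a * E (τs j) * (Rot a)⁻¹ ∈ K,
      ωx ⟨_, h⟩ = finRotate q ^ z * τs j * (finRotate q ^ z)⁻¹ := by
  -- `E (τs j)` permutes the fibers over the block `p` by `σ⁻ᵖ τ σᵖ`, and `σ⁻ᵖ = σᶻ`.
  obtain ⟨p, hp, hpz⟩ := exists_lt_finRotate_pow_eq_zpow (q := q) (-z)
  obtain ⟨a, ha, t, ht₀, ht, hxa⟩ := exists_mem_Agrp_sub_eq_block hs hα x (⟨p, hp⟩ : Fin q)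
  obtain ⟨ρ, hf, -, hρ⟩ := hE.exists_isFiberwise (τs j)
  have hH : Rot a * E (τs j) * (Rot a)⁻¹ ∈ Hgrp s m q α τs E :=
    mul_mem (mul_mem (Rot_mem_Hgrp ha) (E_mem_Hgrp j)) (inv_mem (Rot_mem_Hgrp ha))
  refine ⟨a, ha, hK ⟨hH, (hf.conj_rot a).mem_Delta⟩, ?_⟩
  rw [hω.eq_of_isFiberwise (f := ⟨_, _⟩) (hf.conj_rot a)]
  rw [hxa, hρ _ t ht₀ ht, hpz, zpow_neg, inv_inv]

theorem IsLocalPermAt.zpow_commutator_mem_map (hs : 1 ≤ s)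
    (hα : LinearIndependent ℚ (Fin.cons (1 : ℝ) α)) (hE : PermutesBlocks q E)
    (hω : IsLocalPermAt q x ωx) (hx₀ : 0 ≤ x) (hx : x < 1 / q)
    (hK : Hgrp s m q α τs E ⊓ Delta q ≤ K) (z : ℤ) (j : Fin m) :
    ⁅finRotate q ^ z, τs j⁆ ∈ (⁅Hgrp s m q α τs E, Hgrp s m q α τs E⁆.subgroupOf K).map ωx := by
  obtain ⟨a, ha, hF, hωF⟩ := hω.exists_apply_conj_Rot hs hα hE hK z j
  obtain ⟨hE', hωE⟩ := hω.apply_E hE hx₀ hx hK j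
  refine ⟨⟨_, hF⟩ * ⟨_, hE'⟩⁻¹, ?_, ?_⟩
  · exact Subgroup.commutator_mem_commutator (Rot_mem_Hgrp ha) (E_mem_Hgrp j)
  · rw [map_mul, map_inv, hωF, hωE, commutatorElement_def]

end Generators

theorem stmt_8_general
    (s m q : ℕ) (hs : 1 ≤ s) (hq : 2 ≤ q)
    (α : Fin s → ℝ) (hα : LinearIndependent ℚ (Fin.cons (1 : ℝ) α))
    (τs : Fin m → Equiv.Perm (Fin q))
    (E : Equiv.Perm (Fin q) → Equiv.Perm Circ)
    (hE : ∀ (τ : Equiv.Perm (Fin q)) (i : Fin q) (t : ℝ), 0 ≤ t → t < 1 / q →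
      E τ ((((i : ℕ) : ℝ) / q + t : ℝ) : Circ) = ((((τ i : ℕ) : ℝ) / q + t : ℝ) : Circ))
    (K : Subgroup (Equiv.Perm Circ)) (hK : K = Hgrp s m q α τs E ⊓ Delta q)
    (x : ℝ) (hx0 : 0 ≤ x) (hxq : x < 1 / q)
    (ωx : ↥K →* Equiv.Perm (Fin q))
    (hωx : ∀ (f : ↥K) (i : Fin q),
      (f : Equiv.Perm Circ) ((x + ((i : ℕ) : ℝ) / q : ℝ) : Circ)
        = ((x + ((ωx f i : ℕ) : ℝ) / q : ℝ) : Circ)) :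
    ωx.range = Subgroup.closure
      {π : Equiv.Perm (Fin q) | ∃ p < q, ∃ τ ∈ SQgrp m q τs,
        π = finRotate q ^ p * τ * (finRotate q ^ p)⁻¹} ∧
    Subgroup.map ωx ((⁅Hgrp s m q α τs E, Hgrp s m q α τs E⁆).subgroupOf K) = ⁅Wgrp m q τs, Wgrp m q τs⁆ := by
  have : NeZero q := ⟨by omega⟩
  have hω : IsLocalPermAt q x ωx := hωx
  have hconj (z : ℤ) (j : Fin m) : finRotate q ^ z * τs j * (finRotate q ^ z)⁻¹ ∈ ωx.range := by
    obtain ⟨_, _, _, hωF⟩ := hω.exists_apply_conj_Rot hs hα hE hK.ge z j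
    exact ⟨_, hωF⟩
  have hN : zpowersConjClosure (finRotate q) (Set.range τs) ≤ ωx.range := by
    rw [zpowersConjClosure, Subgroup.closure_le]
    rintro _ ⟨z, _, ⟨j, rfl⟩, rfl⟩
    exact hconj z j
  refine ⟨le_antisymm ?_ ?_, le_antisymm ?_ ?_⟩
  · refine hω.range_le (hK.le.trans (inf_le_inf_right _ (Hgrp_le_fiberwiseSubgroup hE ?_)))
      (disjoint_Agrp_RatPts hα q)
    exact fun j => finRotate_pow_inv_conj_mem_closure (Subgroup.subset_closure ⟨j, rfl⟩)
  · rw [Subgroup.closure_le]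
    rintro _ ⟨p, -, τ, hτ, rfl⟩
    refine conj_mem_of_mem_closure ?_ hτ
    rintro _ ⟨j, rfl⟩
    simpa only [zpow_natCast] using hconj p j
  · exact hω.map_subgroupOf_le ((Subgroup.commutator_mono (Hgrp_le_fiberwiseModCommSubgroup hE)
      (Hgrp_le_fiberwiseModCommSubgroup hE)).trans (commutator_fiberwiseModCommSubgroup_le _ _ _))
  · refine commutator_closure_le_of_zpow_commutator_mem ?_ ?_
    · exact (Subgroup.commutator_mono hN hN).trans
        (commutator_range_le_map_subgroupOf ωx (hK.le.trans inf_le_left))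
    · rintro z _ ⟨j, rfl⟩
      exact hω.zpow_commutator_mem_map hs hα hE hx0 hxq hK.ge z j

theorem stmt_8
    (s m q : ℕ) (hs : 1 ≤ s) (hm : 1 ≤ m) (hq : 2 ≤ q)
    (α : Fin s → ℝ) (hα : LinearIndependent ℚ (Fin.cons (1 : ℝ) α))
    (τs : Fin m → Equiv.Perm (Fin q))
    (E : Equiv.Perm (Fin q) → Equiv.Perm Circ)
    (hE : ∀ (τ : Equiv.Perm (Fin q)) (i : Fin q) (t : ℝ), 0 ≤ t → t < 1 / q →
      E τ ((((i : ℕ) : ℝ) / q + t : ℝ) : Circ) = ((((τ i : ℕ) : ℝ) / q + t : ℝ) : Circ))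
    (K : Subgroup (Equiv.Perm Circ)) (hK : K = Hgrp s m q α τs E ⊓ Delta q)
    (x : ℝ) (hx0 : 0 ≤ x) (hxq : x < 1 / q)
    (ωx : ↥K →* Equiv.Perm (Fin q))
    (hωx : ∀ (f : ↥K) (i : Fin q),
      (f : Equiv.Perm Circ) ((x + ((i : ℕ) : ℝ) / q : ℝ) : Circ)
        = ((x + ((ωx f i : ℕ) : ℝ) / q : ℝ) : Circ)) :
    ωx.range = Subgroup.closure
      {π : Equiv.Perm (Fin q) | ∃ p < q, ∃ τ ∈ SQgrp m q τs,
        π = finRotate q ^ p * τ * (finRotate q ^ p)⁻¹} ∧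
    Subgroup.map ωx ((⁅Hgrp s m q α τs E, Hgrp s m q α τs E⁆).subgroupOf K) = ⁅Wgrp m q τs, Wgrp m q τs⁆ :=
  stmt_8_general s m q hs hq α hα τs E hE K hK x hx0 hxq ωx hωx
end
end

section
/- The commutator subgroup [H,H] is a normal subgroup of K, and the abelianization H/[H,H] of H is isomorphic to the direct product (K/[H,H]) × A; in particular it is isomorphic to (K/[H,H]) × ℤ^s. -/
open Equiv

noncomputable section

/-!
Every generator of `H`, hence every element, moves all points of the circle by the same amount
modulo `RatPts q = ⟨1/q⟩`. This displacement class is a homomorphism `ψ` from `H` to the abelian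
group `Circ ⧸ RatPts q` with kernel `K`, so `[H, H] ≤ K`. It kills the `E τ`, and it sends `R a`
to the class of `a`, which is injective on `A`: the group `A ≅ ℤ^s` is torsion-free (by the
`ℚ`-independence of `1, α₁, …, α_s`), while `RatPts q` is killed by `q`. Hence `H = K ⋊ R_A`,
and `(k, a) ↦ [k]·[R a]` is an isomorphism `K ⧸ [H, H] × A ≃ H^ab`.
-/

open scoped commutatorElement

section SplitAbelianization

variable {P A B : Type*} [Group P] [CommGroup A] [CommGroup B] {H K : Subgroup P}

theorem Subgroup.coe_mem_commutator_iff {y : H} :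
    (y : P) ∈ ⁅H, H⁆ ↔ y ∈ _root_.commutator H := by
  rw [← H.map_subtype_commutator]
  exact Subgroup.mem_map_iff_mem H.subtype_injective

theorem commutator_le_of_ker_eq (φ : H →* B) (hker : φ.ker = K.subgroupOf H) : ⁅H, H⁆ ≤ K := by
  rw [Subgroup.commutator_le]
  intro g₁ h₁ g₂ h₂
  have hφ : ⁅(⟨g₁, h₁⟩ : H), ⟨g₂, h₂⟩⁆ ∈ φ.ker := by
    rw [MonoidHom.mem_ker, map_commutatorElement, commutatorElement_eq_one_iff_mul_comm]
    exact mul_comm _ _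
  rw [hker] at hφ
  exact Subgroup.mem_subgroupOf.1 hφ

variable (hKH : K ≤ H) [(⁅H, H⁆.subgroupOf K).Normal]

def abelianizationProdHom (σ : A →* H) :
    (K ⧸ ⁅H, H⁆.subgroupOf K) × A →* Abelianization H :=
  MonoidHom.coprod
    (QuotientGroup.lift _ (Abelianization.of.comp (Subgroup.inclusion hKH)) fun k hk => by
      rw [Subgroup.mem_subgroupOf, ← Subgroup.coe_inclusion hKH,
        Subgroup.coe_mem_commutator_iff] at hk
      exact (QuotientGroup.eq_one_iff _).2 hk)
    (Abelianization.of.comp σ)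

theorem abelianizationProdHom_mk (σ : A →* H) (k : K) (a : A) :
    abelianizationProdHom hKH σ (k, a) = Abelianization.of (Subgroup.inclusion hKH k * σ a) := by
  rw [map_mul]
  rfl

theorem abelianizationProdHom_bijective (φ : H →* B) (σ : A →* H)
    (hker : φ.ker = K.subgroupOf H) (hinj : Function.Injective (φ.comp σ))
    (hrange : φ.range ≤ (φ.comp σ).range) :
    Function.Bijective (abelianizationProdHom hKH σ) := by
  have hφK : ∀ k : K, φ (Subgroup.inclusion hKH k) = 1 := fun k => by
    rw [← MonoidHom.mem_ker, hker, Subgroup.mem_subgroupOf]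
    exact k.2
  constructor
  · rw [injective_iff_map_eq_one]
    rintro ⟨u, a⟩ h
    obtain ⟨k, rfl⟩ := QuotientGroup.mk_surjective u
    rw [abelianizationProdHom_mk] at h
    obtain rfl : a = 1 := hinj <| by
      simpa [hφK] using congrArg (Abelianization.lift φ) h
    rw [map_one, mul_one] at h
    have hk := Subgroup.coe_mem_commutator_iff.2 ((QuotientGroup.eq_one_iff _).1 h)
    exact Prod.ext ((QuotientGroup.eq_one_iff k).2 (Subgroup.mem_subgroupOf.2 hk)) rfl
  · intro x
    obtain ⟨h, rfl⟩ := QuotientGroup.mk_surjective x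
    obtain ⟨a, ha⟩ := hrange ⟨h, rfl⟩
    have hk : h * (σ a)⁻¹ ∈ K.subgroupOf H := by
      rw [← hker, MonoidHom.mem_ker, map_mul, map_inv, ← MonoidHom.comp_apply, ha, mul_inv_cancel]
    refine ⟨((⟨_, Subgroup.mem_subgroupOf.1 hk⟩ : K), a), ?_⟩
    rw [abelianizationProdHom_mk]
    exact congrArg _ <| Subtype.ext (inv_mul_cancel_right (h : P) (σ a : P))

end SplitAbelianization

section Displacement

variable {M : Type*} [AddCommGroup M] (N : AddSubgroup M)

def constDisplacement : Subgroup (Perm M) where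
  carrier := {f | ∀ x, ((f x - x : M) : M ⧸ N) = (f 0 : M)}
  one_mem' x := by simp
  mul_mem' {f g} hf hg x := by
    have hfg : ∀ y, (((f * g) y - y : M) : M ⧸ N) = (f 0 : M) + (g 0 : M) := fun y => by
      rw [Perm.mul_apply, ← sub_add_sub_cancel _ (g y), QuotientAddGroup.mk_add, hf, hg]
    simpa using (hfg x).trans (hfg 0).symm
  inv_mem' {f} hf x := by
    have hinv : ∀ y, ((f⁻¹ y - y : M) : M ⧸ N) = -(f 0 : M) := fun y => by
      rw [← hf (f⁻¹ y), ← QuotientAddGroup.mk_neg, neg_sub]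
      simp
    simpa using (hinv x).trans (hinv 0).symm

variable {N} in
theorem mk_sub_eq_of_mem_constDisplacement {f : Perm M} (hf : f ∈ constDisplacement N) (x : M) :
    ((f x - x : M) : M ⧸ N) = (f 0 : M) :=
  hf x

def displacement : constDisplacement N →* Multiplicative (M ⧸ N) where
  toFun f := Multiplicative.ofAdd ((f.1 0 : M) : M ⧸ N)
  map_one' := by simp
  map_mul' f g := by
    rw [← ofAdd_add, ← mk_sub_eq_of_mem_constDisplacement f.2 (g.1 0), ← QuotientAddGroup.mk_add,
      sub_add_cancel]
    rfl

theorem displacement_apply (f : constDisplacement N) :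
    displacement N f = Multiplicative.ofAdd ((f.1 0 : M) : M ⧸ N) := rfl

theorem mem_ker_displacement_iff (f : constDisplacement N) :
    f ∈ (displacement N).ker ↔ ∀ x, f.1 x - x ∈ N := by
  rw [MonoidHom.mem_ker, displacement_apply, ofAdd_eq_one]
  refine ⟨fun h x => ?_, fun h => by simpa using h 0⟩
  rw [← QuotientAddGroup.eq_zero_iff, mk_sub_eq_of_mem_constDisplacement f.2, h]

theorem addRight_mem_constDisplacement (a : M) : Equiv.addRight a ∈ constDisplacement N := by
  intro x
  simp

theorem displacement_addRight (a : M) :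
    displacement N ⟨_, addRight_mem_constDisplacement N a⟩ = Multiplicative.ofAdd (a : M ⧸ N) := by
  simp [displacement_apply]

end Displacement

def addRightHom (M : Type*) [AddCommGroup M] : Multiplicative M →* Perm M where
  toFun a := Equiv.addRight a.toAdd
  map_one' := Equiv.addRight_zero
  map_mul' a b := by rw [toAdd_mul, add_comm, Equiv.addRight_add]

theorem linearIndependent_int_coe_circ {s : ℕ} {α : Fin s → ℝ}
    (hα : LinearIndependent ℚ (Fin.cons (1 : ℝ) α)) :
    LinearIndependent ℤ (fun i => (α i : Circ)) := by
  rw [Fintype.linearIndependent_iff]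
  intro n hn
  have hsum : ((∑ i, (n i : ℝ) * α i : ℝ) : Circ) = 0 := by
    simpa [← zsmul_eq_mul] using hn
  obtain ⟨k, hk⟩ := (AddCircle.coe_eq_zero_iff (1 : ℝ)).1 hsum
  have hcomb := Fintype.linearIndependent_iff.1 hα (Fin.cons (-k) fun i => (n i : ℚ)) <| by
    rw [Fin.sum_univ_succ]
    simp [Rat.smul_def, ← hk]
  intro i
  simpa using hcomb i.succ

noncomputable def agrpEquivPi {s : ℕ} {α : Fin s → ℝ}
    (hα : LinearIndependent ℚ (Fin.cons (1 : ℝ) α)) : Agrp s α ≃+ (Fin s → ℤ) :=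
  (AddEquiv.addSubgroupCongr (by rw [Agrp, ← Submodule.span_int_eq_addSubgroupClosure])).trans
    (Module.Basis.span (linearIndependent_int_coe_circ hα)).equivFun.toAddEquiv

theorem nsmul_eq_zero_of_mem_ratPts {q : ℕ} (hq : q ≠ 0) {x : Circ} (hx : x ∈ RatPts q) :
    q • x = 0 := by
  obtain ⟨k, rfl⟩ := hx
  rw [smul_comm, ← AddCircle.coe_nsmul, nsmul_eq_mul, mul_inv_cancel₀ (by exact_mod_cast hq),
    AddCircle.coe_period, smul_zero]

theorem disjoint_agrp_ratPts {s q : ℕ} {α : Fin s → ℝ}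
    (hα : LinearIndependent ℚ (Fin.cons (1 : ℝ) α)) (hq : q ≠ 0) :
    Disjoint (Agrp s α) (RatPts q) := by
  rw [AddSubgroup.disjoint_def]
  intro a ha hr
  have h : q • agrpEquivPi hα ⟨a, ha⟩ = 0 := by
    have : q • (⟨a, ha⟩ : Agrp s α) = 0 := Subtype.ext (nsmul_eq_zero_of_mem_ratPts hq hr)
    rw [← map_nsmul, this, map_zero]
  simpa using (smul_eq_zero.1 h).resolve_left hq

theorem exists_coe_eq_div_add {q : ℕ} (hq : q ≠ 0) (x : Circ) :
    ∃ (i : Fin q) (t : ℝ), 0 ≤ t ∧ t < 1 / q ∧ x = ((((i : ℕ) : ℝ) / q + t : ℝ) : Circ) := by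
  have hq' : (0 : ℝ) < q := by positivity
  obtain ⟨⟨r, hr0, hr1⟩, hr⟩ : ∃ r : Set.Ico (0 : ℝ) (0 + 1), x = ((r : ℝ) : Circ) :=
    ⟨AddCircle.equivIco 1 0 x, AddCircle.coe_equivIco.symm⟩
  rw [zero_add] at hr1
  have hi : ⌊r * q⌋₊ < q := (Nat.floor_lt (by positivity)).2 (by nlinarith)
  refine ⟨⟨_, hi⟩, r - ⌊r * q⌋₊ / q, ?_, ?_, by rw [hr]; ring_nf⟩
  · rw [sub_nonneg, div_le_iff₀ hq']
    exact Nat.floor_le (by positivity)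
  · rw [sub_lt_iff_lt_add, ← add_div, lt_div_iff₀ hq', add_comm]
    exact Nat.lt_floor_add_one _

theorem mem_delta_of_apply_div_add_eq {q : ℕ} (hq : q ≠ 0) (τ : Perm (Fin q)) (f : Perm Circ)
    (hf : ∀ (i : Fin q) (t : ℝ), 0 ≤ t → t < 1 / q →
      f ((((i : ℕ) : ℝ) / q + t : ℝ) : Circ) = ((((τ i : ℕ) : ℝ) / q + t : ℝ) : Circ)) :
    f ∈ Delta q := by
  intro x
  obtain ⟨i, t, ht0, ht1, rfl⟩ := exists_coe_eq_div_add hq x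
  refine ⟨(τ i : ℤ) - (i : ℤ), ?_⟩
  rw [hf i t ht0 ht1]
  show _ • _ = _
  rw [← AddCircle.coe_zsmul, ← AddCircle.coe_sub]
  congr 1
  simp only [zsmul_eq_mul, Int.cast_sub, Int.cast_natCast]
  ring

theorem delta_le_constDisplacement (q : ℕ) : Delta q ≤ constDisplacement (RatPts q) := by
  intro f hf x
  have h0 := hf 0
  rw [sub_zero] at h0
  rw [(QuotientAddGroup.eq_zero_iff _).2 (hf x), (QuotientAddGroup.eq_zero_iff _).2 h0]

theorem rot_eq_addRightHom (a : Circ) : Rot a = addRightHom Circ (.ofAdd a) := rfl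

theorem rot_mem_hgrp {s m q : ℕ} {α : Fin s → ℝ} {τs : Fin m → Perm (Fin q)}
    {E : Perm (Fin q) → Perm Circ} {a : Circ} (ha : a ∈ Agrp s α) : Rot a ∈ Hgrp s m q α τs E := by
  induction ha using AddSubgroup.closure_induction with
  | mem x hx =>
    obtain ⟨i, rfl⟩ := hx
    exact Subgroup.subset_closure (Or.inl ⟨i, rfl⟩)
  | zero => exact (rot_eq_addRightHom 0).trans (map_one _) ▸ one_mem _
  | add x y _ _ hx hy =>
    rw [rot_eq_addRightHom, ofAdd_add, map_mul]
    exact mul_mem hx hy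
  | neg x _ hx =>
    rw [rot_eq_addRightHom, ofAdd_neg, map_inv]
    exact inv_mem hx

section BlockRotationGroup

variable {s m q : ℕ} {α : Fin s → ℝ} {τs : Fin m → Perm (Fin q)} {E : Perm (Fin q) → Perm Circ}

theorem hgrp_le_constDisplacement (hE : ∀ j, E (τs j) ∈ Delta q) :
    Hgrp s m q α τs E ≤ constDisplacement (RatPts q) := by
  rw [Hgrp, Subgroup.closure_le]
  rintro f (⟨i, rfl⟩ | ⟨j, rfl⟩)
  · exact addRight_mem_constDisplacement _ _
  · exact delta_le_constDisplacement q (hE j)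

variable (α τs E) in
def agrpRot : Multiplicative (Agrp s α) →* Hgrp s m q α τs E :=
  ((addRightHom Circ).comp (Agrp s α).subtype.toMultiplicative).codRestrict _
    fun a => rot_mem_hgrp a.toAdd.2

variable (α) in
def hgrpDisplacement (hE : ∀ j, E (τs j) ∈ Delta q) :
    Hgrp s m q α τs E →* Multiplicative (Circ ⧸ RatPts q) :=
  (displacement _).comp (Subgroup.inclusion (hgrp_le_constDisplacement hE))

variable (hE : ∀ j, E (τs j) ∈ Delta q)

theorem ker_hgrpDisplacement :
    (hgrpDisplacement α hE).ker = (Hgrp s m q α τs E ⊓ Delta q).subgroupOf (Hgrp s m q α τs E) := by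
  ext f
  rw [MonoidHom.mem_ker, hgrpDisplacement, MonoidHom.comp_apply, ← MonoidHom.mem_ker,
    mem_ker_displacement_iff, Subgroup.mem_subgroupOf, Subgroup.mem_inf]
  exact (and_iff_right f.2).symm

theorem hgrpDisplacement_agrpRot (a : Multiplicative (Agrp s α)) :
    hgrpDisplacement α hE (agrpRot α τs E a) =
      Multiplicative.ofAdd ((a.toAdd : Circ) : Circ ⧸ RatPts q) :=
  displacement_addRight _ _

theorem injective_hgrpDisplacement_comp_agrpRot (hα : LinearIndependent ℚ (Fin.cons (1 : ℝ) α))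
    (hq : q ≠ 0) : Function.Injective ((hgrpDisplacement α hE).comp (agrpRot α τs E)) := by
  rw [injective_iff_map_eq_one]
  intro a ha
  rw [MonoidHom.comp_apply, hgrpDisplacement_agrpRot, ofAdd_eq_one,
    QuotientAddGroup.eq_zero_iff] at ha
  have := AddSubgroup.disjoint_def.1 (disjoint_agrp_ratPts hα hq) a.toAdd.2 ha
  exact toAdd_eq_zero.1 (Subtype.ext this)

theorem range_hgrpDisplacement_le :
    (hgrpDisplacement α hE).range ≤ ((hgrpDisplacement α hE).comp (agrpRot α τs E)).range := by
  have htop : (⊤ : Subgroup (Hgrp s m q α τs E)) = Subgroup.closure (Subtype.val ⁻¹'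
      ((Set.range fun i => Rot (α i)) ∪ Set.range fun j => E (τs j))) :=
    Subgroup.closure_closure_coe_preimage.symm
  rw [MonoidHom.range_eq_map, htop, MonoidHom.map_closure, Subgroup.closure_le]
  rintro _ ⟨⟨f, hf⟩, ⟨i, rfl⟩ | ⟨j, rfl⟩, rfl⟩
  · exact ⟨.ofAdd ⟨α i, AddSubgroup.subset_closure ⟨i, rfl⟩⟩, rfl⟩
  · have hker : ⟨E (τs j), hf⟩ ∈ (hgrpDisplacement α hE).ker := by
      rw [ker_hgrpDisplacement, Subgroup.mem_subgroupOf]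
      exact ⟨hf, hE j⟩
    exact (MonoidHom.mem_ker.1 hker).symm ▸ one_mem _

end BlockRotationGroup

theorem stmt_16_general
    (s m q : ℕ) (hq : 2 ≤ q)
    (α : Fin s → ℝ) (hα : LinearIndependent ℚ (Fin.cons (1 : ℝ) α))
    (τs : Fin m → Equiv.Perm (Fin q))
    (E : Equiv.Perm (Fin q) → Equiv.Perm Circ)
    (hE : ∀ (τ : Equiv.Perm (Fin q)) (i : Fin q) (t : ℝ), 0 ≤ t → t < 1 / q →
      E τ ((((i : ℕ) : ℝ) / q + t : ℝ) : Circ) = ((((τ i : ℕ) : ℝ) / q + t : ℝ) : Circ))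
    (H K : Subgroup (Equiv.Perm Circ)) (hH : H = Hgrp s m q α τs E) (hK : K = H ⊓ Delta q)
    [inst : ((⁅H, H⁆).subgroupOf K).Normal] :
    ⁅H, H⁆ ≤ K ∧
    ((⁅H, H⁆).subgroupOf K).Normal ∧
    Nonempty (Abelianization ↥H ≃*
      ((↥K ⧸ (⁅H, H⁆).subgroupOf K) × Multiplicative ↥(Agrp s α))) ∧
    Nonempty (Abelianization ↥H ≃*
      ((↥K ⧸ (⁅H, H⁆).subgroupOf K) × Multiplicative (Fin s → ℤ))) := by
  subst hH hK
  have hq0 : q ≠ 0 := by omega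
  have hEΔ : ∀ j, E (τs j) ∈ Delta q := fun j => mem_delta_of_apply_div_add_eq hq0 _ _ (hE (τs j))
  have hker := ker_hgrpDisplacement (α := α) hEΔ
  have hbij := abelianizationProdHom_bijective inf_le_left _ _ hker
    (injective_hgrpDisplacement_comp_agrpRot hEΔ hα hq0) (range_hgrpDisplacement_le (α := α) hEΔ)
  let e := (MulEquiv.ofBijective _ hbij).symm
  exact ⟨commutator_le_of_ker_eq _ hker, inst, ⟨e⟩,
    ⟨e.trans (MulEquiv.prodCongr (MulEquiv.refl _) (agrpEquivPi hα).toMultiplicative)⟩⟩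

theorem stmt_16
    (s m q : ℕ) (hs : 1 ≤ s) (hm : 1 ≤ m) (hq : 2 ≤ q)
    (α : Fin s → ℝ) (hα : LinearIndependent ℚ (Fin.cons (1 : ℝ) α))
    (τs : Fin m → Equiv.Perm (Fin q))
    (E : Equiv.Perm (Fin q) → Equiv.Perm Circ)
    (hE : ∀ (τ : Equiv.Perm (Fin q)) (i : Fin q) (t : ℝ), 0 ≤ t → t < 1 / q →
      E τ ((((i : ℕ) : ℝ) / q + t : ℝ) : Circ) = ((((τ i : ℕ) : ℝ) / q + t : ℝ) : Circ))
    (H K : Subgroup (Equiv.Perm Circ)) (hH : H = Hgrp s m q α τs E) (hK : K = H ⊓ Delta q)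
    [inst : ((⁅H, H⁆).subgroupOf K).Normal] :
    ⁅H, H⁆ ≤ K ∧
    ((⁅H, H⁆).subgroupOf K).Normal ∧
    Nonempty (Abelianization ↥H ≃*
      ((↥K ⧸ (⁅H, H⁆).subgroupOf K) × Multiplicative ↥(Agrp s α))) ∧
    Nonempty (Abelianization ↥H ≃*
      ((↥K ⧸ (⁅H, H⁆).subgroupOf K) × Multiplicative (Fin s → ℤ))) :=
  stmt_16_general s m q hq α hα τs E hE H K hH hK (inst := inst)
end
end
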